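/- arXiv:2505.07389 — 5 statements merged into one kernel-verified Lean document; each statement's English description precedes it below -/
import Mathlib

section
/- Let n be a positive integer, let H and A be n×n complex Hermitian matrices, and let q and r be natural numbers with 0 ≤ q ≤ r. Then Tr(H·A^q·H·A^(r−q)) ≤ Tr(H²·|A|^r), where |A| = (A²)^(1/2) is the positive semidefinite square root of A² and both traces are real numbers. -/
open Matrix
open scoped ComplexOrder

lemma conj_pow_aux {n : ℕ} (U M : Matrix (Fin n) (Fin n) ℂ)
    (h1 : star U * U = 1) (h2 : U * star U = 1) (k : ℕ) :
    (U * M * star U) ^ k = U * M ^ k * star U := by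
  induction k with
  | zero => simp [h2]
  | succ k ih =>
      rw [pow_succ, ih, pow_succ]
      calc U * M ^ k * star U * (U * M * star U)
          = U * M ^ k * (star U * U) * (M * star U) := by
            simp only [mul_assoc]
        _ = U * (M ^ k * M) * star U := by rw [h1]; simp only [mul_one, mul_assoc]


lemma amgm_aux (q r : ℕ) (hqr : q ≤ r) (hr : 0 < r) (x y : ℝ) (hx : 0 ≤ x) (hy : 0 ≤ y) :
    x ^ q * y ^ (r - q) ≤ (q : ℝ) / r * x ^ r + ((r : ℝ) - q) / r * y ^ r := by
  have hr' : (r : ℝ) ≠ 0 := by positivity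
  have hq' : (0:ℝ) ≤ (r : ℝ) - q := by
    rw [sub_nonneg]; exact_mod_cast hqr
  have hmain := Real.geom_mean_le_arith_mean2_weighted
    (w₁ := (q:ℝ)/r) (w₂ := ((r:ℝ)-q)/r) (p₁ := x ^ r) (p₂ := y ^ r)
    (by positivity) (by positivity) (by positivity) (by positivity) (by field_simp; ring)
  have e1 : (x ^ r) ^ ((q:ℝ)/r) = x ^ q := by
    rw [← Real.rpow_natCast x r, ← Real.rpow_natCast x q, ← Real.rpow_mul hx]
    congr 1
    field_simp
  have e2 : (y ^ r) ^ (((r:ℝ)-q)/r) = y ^ (r - q) := by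
    rw [← Real.rpow_natCast y r, ← Real.rpow_natCast y (r - q), ← Real.rpow_mul hy]
    congr 1
    rw [Nat.cast_sub hqr]
    field_simp
  rw [e1, e2] at hmain
  exact hmain

lemma sum_aux {n : ℕ} (q r : ℕ) (hqr : q ≤ r) (c : Fin n → Fin n → ℝ)
    (hc0 : ∀ i j, 0 ≤ c i j) (hcs : ∀ i j, c i j = c j i) (d : Fin n → ℝ) :
    ∑ i, ∑ j, c i j * d j ^ q * d i ^ (r - q) ≤ ∑ i, ∑ j, c i j * |d i| ^ r := by
  rcases Nat.eq_zero_or_pos r with hr | hr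
  · have hq : q = 0 := Nat.le_zero.mp (hr ▸ hqr)
    subst hr; subst hq
    simp
  · calc ∑ i, ∑ j, c i j * d j ^ q * d i ^ (r - q)
        ≤ ∑ i, ∑ j, c i j * ((q:ℝ)/r * |d j| ^ r + ((r:ℝ)-q)/r * |d i| ^ r) := by
          refine Finset.sum_le_sum fun i _ => Finset.sum_le_sum fun j _ => ?_
          rw [mul_assoc]
          refine mul_le_mul_of_nonneg_left ?_ (hc0 i j)
          calc d j ^ q * d i ^ (r - q)
              ≤ |d j| ^ q * |d i| ^ (r - q) := by
                calc d j ^ q * d i ^ (r - q) ≤ |d j ^ q * d i ^ (r - q)| := le_abs_self _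
                  _ = _ := by rw [abs_mul, abs_pow, abs_pow]
            _ ≤ _ := amgm_aux q r hqr hr _ _ (abs_nonneg _) (abs_nonneg _)
    _ = ∑ i, ∑ j, c i j * |d i| ^ r := by
          have hterm : ∀ i j : Fin n, c i j * ((q:ℝ)/r * |d j| ^ r + ((r:ℝ)-q)/r * |d i| ^ r)
              = (q:ℝ)/r * (c i j * |d j| ^ r) + ((r:ℝ)-q)/r * (c i j * |d i| ^ r) := by
            intros; ring
          simp_rw [hterm, Finset.sum_add_distrib, ← Finset.mul_sum]
          have hswap : ∑ i, ∑ j, c i j * |d j| ^ r = ∑ i, ∑ j, c i j * |d i| ^ r := by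
            rw [Finset.sum_comm]
            exact Finset.sum_congr rfl fun i _ => Finset.sum_congr rfl fun j _ => by rw [hcs]
          rw [hswap, ← add_mul]
          have : (q:ℝ)/r + ((r:ℝ)-q)/r = 1 := by field_simp; ring
          rw [this, one_mul]


theorem trace_H_pow_H_pow_le (n : ℕ) (hn : 0 < n)
    (H A : Matrix (Fin n) (Fin n) ℂ) (hH : Hᴴ = H) (hA : Aᴴ = A)
    (q r : ℕ) (hqr : q ≤ r)
    (absA : Matrix (Fin n) (Fin n) ℂ) (habs : absA.PosSemidef)
    (habs_sq : absA ^ 2 = A ^ 2) :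
    (Matrix.trace (H * A ^ q * H * A ^ (r - q))).re ≤
      (Matrix.trace (H ^ 2 * absA ^ r)).re := by
  have hA' : A.IsHermitian := hA
  set U : Matrix (Fin n) (Fin n) ℂ := (hA'.eigenvectorUnitary : Matrix (Fin n) (Fin n) ℂ) with hUdef
  have hU1 : star U * U = 1 := by
    exact_mod_cast (Matrix.mem_unitaryGroup_iff').mp hA'.eigenvectorUnitary.2
  have hU2 : U * star U = 1 := by
    exact_mod_cast (Matrix.mem_unitaryGroup_iff).mp hA'.eigenvectorUnitary.2
  set d : Fin n → ℝ := hA'.eigenvalues with hddef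
  have hspec : A = U * diagonal (fun i => (d i : ℂ)) * star U := by
    have := hA'.spectral_theorem
    exact this
  -- powers of A
  have hApow : ∀ k : ℕ, A ^ k = U * diagonal (fun i => ((d i ^ k : ℝ) : ℂ)) * star U := by
    intro k
    rw [hspec, conj_pow_aux U _ hU1 hU2, diagonal_pow]
    push_cast
    rfl
  -- identify absA
  have habsA : absA = U * diagonal (fun i => ((|d i| : ℝ) : ℂ)) * star U := by
    set B := U * diagonal (fun i => ((|d i| : ℝ) : ℂ)) * star U with hBdef
    have hBpsd : B.PosSemidef := by
      have hd : (diagonal (fun i => ((|d i| : ℝ) : ℂ))).PosSemidef := by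
        rw [posSemidef_diagonal_iff]
        intro i
        rw [Complex.zero_le_real]
        positivity
      have := hd.mul_mul_conjTranspose_same U
      rwa [← Matrix.star_eq_conjTranspose] at this
    have hBsq : B ^ 2 = A ^ 2 := by
      have hfun : (fun i => ((|d i| : ℝ) : ℂ)) ^ 2 = fun i => ((d i ^ 2 : ℝ) : ℂ) := by
        funext i
        rw [Pi.pow_apply, ← Complex.ofReal_pow, sq_abs]
      rw [hBdef, conj_pow_aux U _ hU1 hU2, diagonal_pow, hfun, hApow 2]
    exact (by open scoped MatrixOrder Matrix.Norms.L2Operator in exact (CFC.sq_eq_sq_iff absA B habs.nonneg hBpsd.nonneg).mp (habs_sq.trans hBsq.symm))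
  have habspow : ∀ k : ℕ, absA ^ k = U * diagonal (fun i => ((|d i| ^ k : ℝ) : ℂ)) * star U := by
    intro k
    have hfun : (fun i => ((|d i| : ℝ) : ℂ)) ^ k = fun i => ((|d i| ^ k : ℝ) : ℂ) := by
      funext i
      rw [Pi.pow_apply, Complex.ofReal_pow]
    rw [habsA, conj_pow_aux U _ hU1 hU2, diagonal_pow, hfun]
  set K := star U * H * U with hKdef
  have cancel1 : ∀ Z : Matrix (Fin n) (Fin n) ℂ, star U * (U * Z) = Z := by
    intro Z; rw [← mul_assoc, hU1, one_mul]
  have cancel2 : ∀ Z : Matrix (Fin n) (Fin n) ℂ, U * (star U * Z) = Z := by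
    intro Z; rw [← mul_assoc, hU2, one_mul]
  have trace_conj : ∀ X : Matrix (Fin n) (Fin n) ℂ,
      Matrix.trace X = Matrix.trace (star U * X * U) := by
    intro X
    rw [Matrix.trace_mul_comm, ← mul_assoc, hU2, one_mul]
  set c : Fin n → Fin n → ℝ := fun i j => Complex.normSq (K i j) with hcdef
  have hKherm : Kᴴ = K := by
    rw [hKdef]
    rw [conjTranspose_mul, conjTranspose_mul, hH, Matrix.star_eq_conjTranspose,
      conjTranspose_conjTranspose, mul_assoc]
  have hKconj : ∀ i j, K j i = starRingEnd ℂ (K i j) := by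
    intro i j
    conv_lhs => rw [← hKherm]
    rw [conjTranspose_apply]
    rfl
  have hKK : ∀ i j, K i j * K j i = ((c i j : ℝ) : ℂ) := by
    intro i j
    rw [hKconj i j, Complex.mul_conj, hcdef]
  have traceL : Matrix.trace (H * A ^ q * H * A ^ (r - q)) =
      ((∑ i, ∑ j, c i j * (d j ^ q) * (d i ^ (r - q)) : ℝ) : ℂ) := by
    rw [trace_conj]
    have hX : star U * (H * A ^ q * H * A ^ (r - q)) * U =
        K * diagonal (fun i => ((d i ^ q : ℝ) : ℂ)) * K
          * diagonal (fun i => ((d i ^ (r - q) : ℝ) : ℂ)) := by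
      rw [hApow q, hApow (r - q), hKdef]
      simp only [mul_assoc, cancel1, cancel2, hU1, hU2, mul_one]
    rw [hX]
    rw [Matrix.trace]
    push_cast
    rw [Finset.sum_congr rfl]
    intro i _
    rw [Matrix.diag_apply, Matrix.mul_diagonal, Matrix.mul_apply, Finset.sum_mul,
      Finset.sum_congr rfl]
    intro j _
    rw [Matrix.mul_diagonal]
    rw [show K i j * ((d j : ℝ) : ℂ) ^ q * K j i * ((d i : ℝ) : ℂ) ^ (r - q)
        = K i j * K j i * (((d j : ℝ) : ℂ) ^ q * ((d i : ℝ) : ℂ) ^ (r - q)) by ring,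
      hKK i j]
    ring
  have traceR : Matrix.trace (H ^ 2 * absA ^ r) =
      ((∑ i, ∑ j, c i j * |d i| ^ r : ℝ) : ℂ) := by
    rw [trace_conj]
    have hX : star U * (H ^ 2 * absA ^ r) * U =
        K * K * diagonal (fun i => ((|d i| ^ r : ℝ) : ℂ)) := by
      rw [habspow r, hKdef, pow_two]
      simp only [mul_assoc, cancel1, cancel2, hU1, hU2, mul_one]
    rw [hX]
    rw [Matrix.trace]
    push_cast
    rw [Finset.sum_congr rfl]
    intro i _
    rw [Matrix.diag_apply, Matrix.mul_diagonal, Matrix.mul_apply, Finset.sum_mul,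
      Finset.sum_congr rfl]
    intro j _
    rw [hKK i j]
  rw [traceL, traceR, Complex.ofReal_re, Complex.ofReal_re]
  refine sum_aux q r hqr c (fun i j => Complex.normSq_nonneg _) (fun i j => ?_) d
  rw [hcdef]
  simp only
  rw [hKconj j i]
  exact Complex.normSq_conj _
end

section
/- Let n be a positive integer and let f : M → Tr(exp M) be defined on the space of n×n real matrices, where exp is the matrix exponential. Then for every n×n real matrix M, f is Fréchet differentiable at M and its derivative at M in direction H equals Tr(exp(M)·H) for every n×n real matrix H. -/
open Matrix
attribute [local instance] Matrix.normedAddCommGroup Matrix.normedSpace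
namespace TEAux
variable {n : ℕ}
section
@[reducible] noncomputable def matNACG : NormedAddCommGroup (Matrix (Fin n) (Fin n) ℝ) :=
  Matrix.normedAddCommGroup
@[reducible] noncomputable def matACG : AddCommGroup (Matrix (Fin n) (Fin n) ℝ) :=
  matNACG.toSeminormedAddCommGroup.toAddCommGroup
@[reducible] noncomputable def matACM : AddCommMonoid (Matrix (Fin n) (Fin n) ℝ) :=
  matACG.toAddCommMonoid
@[reducible] noncomputable def matTop : TopologicalSpace (Matrix (Fin n) (Fin n) ℝ) :=
  matNACG.toSeminormedAddCommGroup.toPseudoMetricSpace.toUniformSpace.toTopologicalSpace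
@[reducible] noncomputable def matMod : Module ℝ (Matrix (Fin n) (Fin n) ℝ) :=
  (Matrix.normedSpace : NormedSpace ℝ (Matrix (Fin n) (Fin n) ℝ)).toModule
attribute [local instance] matACG matACM matTop matMod


lemma mnorm_mul_le (X Y : Matrix (Fin n) (Fin n) ℝ) : ‖X * Y‖ ≤ n * ‖X‖ * ‖Y‖ := by
  have h : (0:ℝ) ≤ n * ‖X‖ * ‖Y‖ := by positivity
  rw [Matrix.norm_le_iff h]
  intro i j
  rw [Matrix.mul_apply]
  calc ‖∑ k, X i k * Y k j‖ ≤ ∑ k, ‖X i k * Y k j‖ := norm_sum_le _ _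
    _ ≤ ∑ _k : Fin n, ‖X‖ * ‖Y‖ := by
        refine Finset.sum_le_sum fun k _ => ?_
        rw [norm_mul]
        exact mul_le_mul (Matrix.norm_entry_le_entrywise_sup_norm X)
          (Matrix.norm_entry_le_entrywise_sup_norm Y) (norm_nonneg _) (norm_nonneg _)
    _ = n * ‖X‖ * ‖Y‖ := by simp [Finset.sum_const, mul_assoc]

lemma mnorm_one_le : ‖(1 : Matrix (Fin n) (Fin n) ℝ)‖ ≤ 1 := by
  rw [Matrix.norm_le_iff zero_le_one]
  intro i j
  rw [Matrix.one_apply]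
  split <;> simp

lemma mnorm_pow_le (A : Matrix (Fin n) (Fin n) ℝ) (k : ℕ) : ‖A ^ k‖ ≤ (n * ‖A‖) ^ k := by
  induction k with
  | zero => simpa using mnorm_one_le
  | succ k ih =>
      calc ‖A ^ (k+1)‖ = ‖A ^ k * A‖ := by rw [pow_succ]
        _ ≤ n * ‖A ^ k‖ * ‖A‖ := mnorm_mul_le _ _
        _ ≤ n * (n * ‖A‖) ^ k * ‖A‖ := by
            have hn : (0:ℝ) ≤ n := by positivity
            gcongr
        _ = (n * ‖A‖) ^ (k+1) := by ring

lemma mtrace_abs_le (X : Matrix (Fin n) (Fin n) ℝ) : |X.trace| ≤ n * ‖X‖ := by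
  calc |X.trace| = |∑ i, X i i| := by rw [Matrix.trace]; rfl
    _ ≤ ∑ i, |X i i| := Finset.abs_sum_le_sum_abs _ _
    _ ≤ ∑ _i : Fin n, ‖X‖ := Finset.sum_le_sum fun i _ =>
        Matrix.norm_entry_le_entrywise_sup_norm X
    _ = n * ‖X‖ := by simp [Finset.sum_const]


noncomputable def mulRc (C : Matrix (Fin n) (Fin n) ℝ) :
    Matrix (Fin n) (Fin n) ℝ →L[ℝ] Matrix (Fin n) (Fin n) ℝ :=
  LinearMap.toContinuousLinearMap (LinearMap.mulRight ℝ C)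

@[simp] lemma mulRc_apply (C X : Matrix (Fin n) (Fin n) ℝ) : mulRc C X = X * C := rfl

noncomputable def mulL : Matrix (Fin n) (Fin n) ℝ →L[ℝ] Matrix (Fin n) (Fin n) ℝ →L[ℝ] Matrix (Fin n) (Fin n) ℝ :=
  LinearMap.toContinuousLinearMap
    { toFun := fun A => LinearMap.toContinuousLinearMap (LinearMap.mulLeft ℝ A)
      map_add' := by intro A B; ext X; simp [add_mul]
      map_smul' := by intro c A; ext X; simp [smul_mul_assoc] }

@[simp] lemma mulL_apply (A X : Matrix (Fin n) (Fin n) ℝ) : mulL A X = A * X := rfl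

noncomputable def powD (k : ℕ) (A : Matrix (Fin n) (Fin n) ℝ) :
    Matrix (Fin n) (Fin n) ℝ →L[ℝ] Matrix (Fin n) (Fin n) ℝ :=
  ∑ i ∈ Finset.range k, (mulL (A ^ i)).comp (mulRc (A ^ (k - 1 - i)))

lemma powD_apply (k : ℕ) (A H : Matrix (Fin n) (Fin n) ℝ) :
    powD k A H = ∑ i ∈ Finset.range k, A ^ i * (H * A ^ (k - 1 - i)) := by
  simp [powD, ContinuousLinearMap.sum_apply]

lemma hasFDerivAt_pow' (k : ℕ) (A : Matrix (Fin n) (Fin n) ℝ) :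
    HasFDerivAt (fun X : Matrix (Fin n) (Fin n) ℝ => X ^ k) (powD k A) A := by
  induction k with
  | zero =>
      have : powD 0 A = 0 := by simp [powD]
      rw [this]
      simpa using hasFDerivAt_const (1 : Matrix (Fin n) (Fin n) ℝ) A
  | succ k ih =>
      have h := mulL.hasFDerivAt_of_bilinear ih (hasFDerivAt_id A)
      simp only [id_eq] at h
      have hfun : (fun X : Matrix (Fin n) (Fin n) ℝ => mulL (X ^ k) X)
          = fun X => X ^ (k + 1) := by
        funext X; simp [pow_succ]
      erw [hfun] at h
      refine h.congr_fderiv (Eq.symm ?_)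
      refine ContinuousLinearMap.ext fun H => ?_
      simp only [powD_apply, ContinuousLinearMap.add_apply, ContinuousLinearMap.precompR,
        ContinuousLinearMap.precompL_apply, ContinuousLinearMap.compL_apply,
        ContinuousLinearMap.coe_comp', Function.comp_apply, ContinuousLinearMap.coe_id',
        id_eq, mulL_apply, Nat.add_sub_cancel]
      rw [Finset.sum_range_succ]
      have hlast : A ^ k * (H * A ^ (k - k)) = A ^ k * H := by simp
      rw [hlast]
      have hstep : ∀ i ∈ Finset.range k,
          A ^ i * (H * A ^ (k - i)) = A ^ i * (H * A ^ (k - 1 - i)) * A := by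
        intro i hi
        have hik : i < k := Finset.mem_range.mp hi
        have : k - i = (k - 1 - i) + 1 := by omega
        rw [this, pow_succ]
        noncomm_ring
      rw [Finset.sum_congr rfl hstep, ← Finset.sum_mul]
      rw [add_comm]

lemma trace_powD (k : ℕ) (A H : Matrix (Fin n) (Fin n) ℝ) :
    (powD k A H).trace = k * (A ^ (k - 1) * H).trace := by
  rw [powD_apply, Matrix.trace_sum]
  have : ∀ i ∈ Finset.range k,
      (A ^ i * (H * A ^ (k - 1 - i))).trace = (A ^ (k - 1) * H).trace := by
    intro i hi
    have hik : i < k := Finset.mem_range.mp hi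
    rw [Matrix.trace_mul_comm, mul_assoc, ← pow_add]
    have : k - 1 - i + i = k - 1 := by omega
    rw [this, Matrix.trace_mul_comm]
  rw [Finset.sum_congr rfl this, Finset.sum_const, Finset.card_range, nsmul_eq_mul]


noncomputable def trL : Matrix (Fin n) (Fin n) ℝ →L[ℝ] ℝ :=
  LinearMap.toContinuousLinearMap (Matrix.traceLinearMap (Fin n) ℝ ℝ)

@[simp] lemma trL_apply (X : Matrix (Fin n) (Fin n) ℝ) : trL X = X.trace := rfl

noncomputable def Dk (k : ℕ) (A : Matrix (Fin n) (Fin n) ℝ) :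
    Matrix (Fin n) (Fin n) ℝ →L[ℝ] ℝ :=
  ((k : ℝ) * (k.factorial : ℝ)⁻¹) • (trL.comp (mulL (A ^ (k - 1))))

lemma Dk_apply (k : ℕ) (A H : Matrix (Fin n) (Fin n) ℝ) :
    Dk k A H = (k : ℝ) * (k.factorial : ℝ)⁻¹ * (A ^ (k - 1) * H).trace := by
  simp [Dk]

lemma hasFDerivAt_fk (k : ℕ) (A : Matrix (Fin n) (Fin n) ℝ) :
    HasFDerivAt (fun X : Matrix (Fin n) (Fin n) ℝ =>
      (k.factorial : ℝ)⁻¹ * (X ^ k).trace) (Dk k A) A := by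
  have h := (trL.hasFDerivAt.comp A (hasFDerivAt_pow' k A)).const_smul
    ((k.factorial : ℝ)⁻¹)
  simp only [Function.comp_def] at h
  have hfun : (fun X : Matrix (Fin n) (Fin n) ℝ => (k.factorial : ℝ)⁻¹ • trL (X ^ k))
      = fun X => (k.factorial : ℝ)⁻¹ * (X ^ k).trace := by
    funext X; simp [smul_eq_mul]
  have hfun' : ((k.factorial : ℝ)⁻¹ • fun X : Matrix (Fin n) (Fin n) ℝ => trL (X ^ k))
      = fun X => (k.factorial : ℝ)⁻¹ * (X ^ k).trace := hfun
  erw [hfun'] at h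
  refine h.congr_fderiv (Eq.symm ?_)
  refine ContinuousLinearMap.ext fun H => ?_
  rw [Dk_apply]
  simp only [ContinuousLinearMap.coe_smul', Pi.smul_apply, ContinuousLinearMap.coe_comp',
    Function.comp_apply, trL_apply, smul_eq_mul]
  rw [trace_powD]
  ring

lemma Dk_norm_le (k : ℕ) (A : Matrix (Fin n) (Fin n) ℝ) {R : ℝ} (hR : 0 ≤ R)
    (hA : ‖A‖ ≤ R) :
    ‖Dk k A‖ ≤ (k : ℝ) * (k.factorial : ℝ)⁻¹ * ((n : ℝ) * n * ((n : ℝ) * R) ^ (k - 1)) := by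
  have hkn : (0:ℝ) ≤ (k : ℝ) * (k.factorial : ℝ)⁻¹ := by positivity
  apply ContinuousLinearMap.opNorm_le_bound _ (by positivity)
  intro H
  rw [Dk_apply]
  have key : |(A ^ (k - 1) * H).trace| ≤ (n : ℝ) * n * ((n : ℝ) * R) ^ (k - 1) * ‖H‖ := by
    calc |(A ^ (k - 1) * H).trace| ≤ n * ‖A ^ (k - 1) * H‖ := mtrace_abs_le _
      _ ≤ n * ((n : ℝ) * ‖A ^ (k - 1)‖ * ‖H‖) := by
          have := mnorm_mul_le (A ^ (k - 1)) H
          have hn : (0:ℝ) ≤ n := by positivity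
          nlinarith [norm_nonneg (A ^ (k-1) * H)]
      _ ≤ n * ((n : ℝ) * ((n : ℝ) * R) ^ (k - 1) * ‖H‖) := by
          have h1 : ‖A ^ (k - 1)‖ ≤ ((n : ℝ) * R) ^ (k - 1) := by
            refine (mnorm_pow_le A (k - 1)).trans ?_
            exact pow_le_pow_left₀ (by positivity) (by nlinarith [norm_nonneg A]) _
          gcongr
      _ = (n : ℝ) * n * ((n : ℝ) * R) ^ (k - 1) * ‖H‖ := by ring
  calc ‖(k : ℝ) * (k.factorial : ℝ)⁻¹ * (A ^ (k - 1) * H).trace‖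
      = (k : ℝ) * (k.factorial : ℝ)⁻¹ * |(A ^ (k - 1) * H).trace| := by
        rw [Real.norm_eq_abs, abs_mul, abs_of_nonneg hkn]
    _ ≤ (k : ℝ) * (k.factorial : ℝ)⁻¹ * ((n : ℝ) * n * ((n : ℝ) * R) ^ (k - 1) * ‖H‖) := by
        exact mul_le_mul_of_nonneg_left key hkn
    _ = (k : ℝ) * (k.factorial : ℝ)⁻¹ * ((n : ℝ) * n * ((n : ℝ) * R) ^ (k - 1)) * ‖H‖ := by
        ring

lemma summable_core {y : ℝ} (hy : 0 ≤ y) :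
    Summable fun k : ℕ => (k : ℝ) * (k.factorial : ℝ)⁻¹ * y ^ (k - 1) := by
  refine Summable.of_nonneg_of_le (fun k => by positivity) (fun k => ?_)
    (Real.summable_pow_div_factorial (2 + 2 * y))
  have hk2 : (k : ℝ) ≤ 2 ^ k := by exact_mod_cast (Nat.lt_two_pow_self (n := k)).le
  have hy1 : y ^ (k - 1) ≤ (1 + y) ^ k :=
    (pow_le_pow_left₀ hy (by linarith) _).trans
      (pow_le_pow_right₀ (by linarith) (Nat.sub_le k 1))
  have hmul : (k : ℝ) * y ^ (k - 1) ≤ 2 ^ k * (1 + y) ^ k :=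
    mul_le_mul hk2 hy1 (by positivity) (by positivity)
  calc (k : ℝ) * (k.factorial : ℝ)⁻¹ * y ^ (k - 1)
      = ((k : ℝ) * y ^ (k - 1)) * (k.factorial : ℝ)⁻¹ := by ring
    _ ≤ (2 ^ k * (1 + y) ^ k) * (k.factorial : ℝ)⁻¹ := by
        have : (0:ℝ) ≤ (k.factorial : ℝ)⁻¹ := by positivity
        exact mul_le_mul_of_nonneg_right hmul this
    _ = (2 + 2 * y) ^ k / k.factorial := by rw [← mul_pow]; ring

lemma summable_expSeries (A : Matrix (Fin n) (Fin n) ℝ) :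
    Summable fun k : ℕ => (k.factorial : ℝ)⁻¹ • A ^ k := by
  apply Summable.of_norm
  refine Summable.of_nonneg_of_le (fun k => norm_nonneg _) (fun k => ?_)
    (Real.summable_pow_div_factorial ((n : ℝ) * ‖A‖))
  rw [norm_smul, Real.norm_eq_abs, abs_of_nonneg (by positivity)]
  calc (k.factorial : ℝ)⁻¹ * ‖A ^ k‖ ≤ (k.factorial : ℝ)⁻¹ * ((n : ℝ) * ‖A‖) ^ k := by
        exact mul_le_mul_of_nonneg_left (mnorm_pow_le A k) (by positivity)
    _ = ((n : ℝ) * ‖A‖) ^ k / k.factorial := by ring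

end

lemma summable_map_clm {F G : Type*} [NormedAddCommGroup F] [NormedSpace ℝ F]
    [NormedAddCommGroup G] [NormedSpace ℝ G] (g : F →L[ℝ] G) {f : ℕ → F}
    (hf : Summable f) : Summable fun k => g (f k) :=
  hf.map g.toLinearMap.toAddMonoidHom g.continuous

lemma trace_exp_eq (A : Matrix (Fin n) (Fin n) ℝ) :
    (NormedSpace.exp A).trace = ∑' k : ℕ, (k.factorial : ℝ)⁻¹ * (A ^ k).trace := by
  rw [NormedSpace.exp_eq_tsum (𝕂 := ℝ)]
  calc (∑' k : ℕ, (k.factorial : ℝ)⁻¹ • A ^ k).trace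
      = trL (∑' k : ℕ, (k.factorial : ℝ)⁻¹ • A ^ k) := rfl
    _ = ∑' k : ℕ, trL ((k.factorial : ℝ)⁻¹ • A ^ k) :=
        trL.map_tsum (summable_expSeries A)
    _ = ∑' k : ℕ, (k.factorial : ℝ)⁻¹ * (A ^ k).trace := by
        refine tsum_congr fun k => ?_
        simp [smul_eq_mul, Matrix.trace_smul]

lemma trace_exp_mul (M H : Matrix (Fin n) (Fin n) ℝ) :
    (NormedSpace.exp M * H).trace = ∑' k : ℕ, (k.factorial : ℝ)⁻¹ * (M ^ k * H).trace := by
  rw [NormedSpace.exp_eq_tsum (𝕂 := ℝ)]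
  have h1 : (∑' k : ℕ, (k.factorial : ℝ)⁻¹ • M ^ k) * H
      = ∑' k : ℕ, ((k.factorial : ℝ)⁻¹ • M ^ k) * H := by
    have := (mulRc H).map_tsum (summable_expSeries M)
    exact this
  rw [h1]
  calc (∑' k : ℕ, ((k.factorial : ℝ)⁻¹ • M ^ k) * H).trace
      = trL (∑' k : ℕ, ((k.factorial : ℝ)⁻¹ • M ^ k) * H) := rfl
    _ = ∑' k : ℕ, trL (((k.factorial : ℝ)⁻¹ • M ^ k) * H) := by
        refine trL.map_tsum ?_
        have := summable_map_clm (mulRc H) (summable_expSeries M)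
        simpa using this
    _ = ∑' k : ℕ, (k.factorial : ℝ)⁻¹ * (M ^ k * H).trace := by
        refine tsum_congr fun k => ?_
        rw [Matrix.smul_mul]
        simp [smul_eq_mul, Matrix.trace_smul]

end TEAux

/- The map f : M ↦ Tr(exp M) on n×n real matrices is Fréchet differentiable at every M,
with derivative H ↦ Tr(exp(M) * H). -/
theorem differentiable_trace_exp (n : ℕ) (hn : 0 < n)
    (M : Matrix (Fin n) (Fin n) ℝ) :
    DifferentiableAt ℝ (fun A : Matrix (Fin n) (Fin n) ℝ => (NormedSpace.exp A).trace) M ∧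
      ∀ H : Matrix (Fin n) (Fin n) ℝ,
        fderiv ℝ (fun A : Matrix (Fin n) (Fin n) ℝ => (NormedSpace.exp A).trace) M H =
          (NormedSpace.exp M * H).trace := by
  classical
  set R : ℝ := ‖M‖ + 1 with hRdef
  have hR0 : (0:ℝ) ≤ R := by positivity
  set u : ℕ → ℝ :=
    fun k => (k : ℝ) * (k.factorial : ℝ)⁻¹ * ((n:ℝ)*n*((n:ℝ)*R)^(k-1)) with hu_def
  have hu : Summable u := by
    have h := (TEAux.summable_core (y := (n:ℝ)*R) (by positivity)).mul_left ((n:ℝ)*n)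
    refine h.congr fun k => ?_
    simp only [hu_def]; ring
  have hMs : M ∈ Metric.ball (0 : Matrix (Fin n) (Fin n) ℝ) R := by
    rw [mem_ball_zero_iff, hRdef]; linarith
  have hf' : ∀ (k : ℕ) (A : Matrix (Fin n) (Fin n) ℝ),
      A ∈ Metric.ball (0 : Matrix (Fin n) (Fin n) ℝ) R → ‖TEAux.Dk k A‖ ≤ u k := by
    intro k A hA
    rw [mem_ball_zero_iff] at hA
    exact TEAux.Dk_norm_le k A hR0 hA.le
  have hf0 : Summable fun k : ℕ => (k.factorial : ℝ)⁻¹ * (M ^ k).trace := by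
    apply Summable.of_norm
    refine Summable.of_nonneg_of_le (fun k => norm_nonneg _) (fun k => ?_)
      ((Real.summable_pow_div_factorial ((n:ℝ)*‖M‖)).mul_left (n:ℝ))
    rw [Real.norm_eq_abs, abs_mul, abs_of_nonneg (by positivity : (0:ℝ) ≤ (k.factorial:ℝ)⁻¹)]
    calc (k.factorial:ℝ)⁻¹ * |(M^k).trace|
        ≤ (k.factorial:ℝ)⁻¹ * ((n:ℝ)*‖M^k‖) :=
          mul_le_mul_of_nonneg_left (TEAux.mtrace_abs_le _) (by positivity)
      _ ≤ (k.factorial:ℝ)⁻¹ * ((n:ℝ)*((n:ℝ)*‖M‖)^k) := by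
          have := TEAux.mnorm_pow_le M k
          gcongr
      _ = (n:ℝ) * (((n:ℝ)*‖M‖)^k / k.factorial) := by ring
  have HF : HasFDerivAt (fun A : Matrix (Fin n) (Fin n) ℝ =>
      ∑' k : ℕ, (k.factorial : ℝ)⁻¹ * (A ^ k).trace) (∑' k : ℕ, TEAux.Dk k M) M :=
    hasFDerivAt_tsum_of_isPreconnected hu Metric.isOpen_ball
      ((convex_ball _ _).isPreconnected) (fun k A _ => TEAux.hasFDerivAt_fk k A)
      hf' hMs hf0 hMs
  have hfun : (fun A : Matrix (Fin n) (Fin n) ℝ => (NormedSpace.exp A).trace)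
      = fun A => ∑' k : ℕ, (k.factorial : ℝ)⁻¹ * (A ^ k).trace :=
    funext fun A => TEAux.trace_exp_eq A
  have HG : HasFDerivAt (fun A : Matrix (Fin n) (Fin n) ℝ => (NormedSpace.exp A).trace)
      (∑' k : ℕ, TEAux.Dk k M) M := by rw [hfun]; exact HF
  refine ⟨HG.differentiableAt, fun H => ?_⟩
  erw [HG.fderiv]
  have hsumD : Summable fun k : ℕ => TEAux.Dk k M := by
    apply Summable.of_norm
    exact Summable.of_nonneg_of_le (fun k => norm_nonneg _) (fun k => hf' k M hMs) hu
  have happ : (∑' k : ℕ, TEAux.Dk k M) H = ∑' k : ℕ, TEAux.Dk k M H := by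
    have := (ContinuousLinearMap.apply ℝ ℝ H).map_tsum hsumD
    simpa using this
  erw [happ]
  have hsa : Summable fun k : ℕ => TEAux.Dk k M H := by
    simpa using TEAux.summable_map_clm (ContinuousLinearMap.apply ℝ ℝ H) hsumD
  rw [hsa.tsum_eq_zero_add]
  have h0 : TEAux.Dk 0 M H = 0 := by simp [TEAux.Dk_apply]
  have hsucc : ∀ k : ℕ, TEAux.Dk (k+1) M H = (k.factorial : ℝ)⁻¹ * (M ^ k * H).trace := by
    intro k
    rw [TEAux.Dk_apply]
    have hkf : (k.factorial : ℝ) ≠ 0 := Nat.cast_ne_zero.mpr k.factorial_ne_zero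
    have hk1 : ((k:ℝ)+1) ≠ 0 := by positivity
    simp only [Nat.add_sub_cancel, Nat.factorial_succ, Nat.cast_add, Nat.cast_one, Nat.cast_mul]
    field_simp
  rw [h0, zero_add, tsum_congr hsucc, TEAux.trace_exp_mul]
end

section
/- Let n, p be positive integers and let f(X) = (Tr(X^(2p)))^(1/p) on the space of n×n real matrices. Then for every nonzero n×n real symmetric matrix X, f is Fréchet differentiable at X and its derivative at X in direction H equals 2·(Tr(X^(2p)))^(1/p − 1)·Tr(X^(2p−1)·H) for every n×n real matrix H. -/
open Matrix

attribute [local instance] Matrix.normedAddCommGroup Matrix.normedSpace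

namespace TraceRpowAux

variable {n : ℕ}

local notation "M" => Matrix (Fin n) (Fin n) ℝ

/-- Multiplication as a continuous bilinear map (finite dimension). -/
noncomputable def mulL (n : ℕ) :
    Matrix (Fin n) (Fin n) ℝ →L[ℝ] Matrix (Fin n) (Fin n) ℝ →L[ℝ] Matrix (Fin n) (Fin n) ℝ :=
  LinearMap.toContinuousLinearMap
    { toFun := fun A => LinearMap.toContinuousLinearMap (LinearMap.mulLeft ℝ A)
      map_add' := by intro A B; ext C; simp [add_mul]
      map_smul' := by intro r A; ext C; simp [smul_mul_assoc] }

@[simp] lemma mulL_apply (A B : M) : mulL n A B = A * B := by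
  simp [mulL]

/-- Derivative of `A ↦ A ^ m` at `X`. -/
noncomputable def powD (X : M) (m : ℕ) : M →L[ℝ] M :=
  LinearMap.toContinuousLinearMap
    (∑ i ∈ Finset.range m,
      (LinearMap.mulLeft ℝ (X ^ i)).comp (LinearMap.mulRight ℝ (X ^ (m - 1 - i))))

lemma powD_apply (X : M) (m : ℕ) (H : M) :
    powD X m H = ∑ i ∈ Finset.range m, X ^ i * H * X ^ (m - 1 - i) := by
  simp [powD, LinearMap.sum_apply, mul_assoc]

lemma hasFDerivAt_pow (m : ℕ) (X : M) :
    HasFDerivAt (fun A : M => A ^ m) (powD X m) X := by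
  induction m with
  | zero =>
    have h0 : powD X 0 = 0 := by ext H; simp [powD_apply]
    simpa [h0] using hasFDerivAt_const (1 : M) X
  | succ m ih =>
    have hb := (mulL n).isBoundedBilinearMap.hasFDerivAt (X ^ m, X)
    have hkey : HasFDerivAt (fun A : M => mulL n (A ^ m) A)
        (((mulL n).isBoundedBilinearMap.deriv (X ^ m, X)).comp
          ((powD X m).prod (ContinuousLinearMap.id ℝ M))) X :=
      HasFDerivAt.comp (f := fun A : M => (A ^ m, A)) X hb (ih.prodMk (hasFDerivAt_id X))
    have hkey : HasFDerivAt (fun A : M => A ^ m * A)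
        (((mulL n).isBoundedBilinearMap.deriv (X ^ m, X)).comp
          ((powD X m).prod (ContinuousLinearMap.id ℝ M))) X := by
      simpa using hkey
    have heq : ((mulL n).isBoundedBilinearMap.deriv (X ^ m, X)).comp
          ((powD X m).prod (ContinuousLinearMap.id ℝ M)) = powD X (m + 1) := by
      ext H : 1
      erw [ContinuousLinearMap.comp_apply]
      erw [IsBoundedBilinearMap.deriv_apply]
      show X ^ m * H + powD X m H * X = powD X (m + 1) H
      simp only [ContinuousLinearMap.prod_apply, ContinuousLinearMap.coe_id', id_eq,
        mulL_apply, powD_apply]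
      rw [Finset.sum_range_succ, Finset.sum_mul]
      have : ∀ i ∈ Finset.range m,
          X ^ i * H * X ^ (m - 1 - i) * X = X ^ i * H * X ^ (m + 1 - 1 - i) := by
        intro i hi
        rw [Finset.mem_range] at hi
        rw [mul_assoc, ← pow_succ]
        congr 2
        omega
      rw [Finset.sum_congr rfl this]
      simp [add_comm]
    rw [heq] at hkey
    have : (fun A : M => A ^ (m + 1)) = fun A : M => A ^ m * A := by
      funext A; rw [pow_succ]
    rw [this]
    exact hkey

/-- Trace as a continuous linear map. -/
noncomputable def traceL (n : ℕ) : Matrix (Fin n) (Fin n) ℝ →L[ℝ] ℝ :=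
  LinearMap.toContinuousLinearMap (Matrix.traceLinearMap (Fin n) ℝ ℝ)

@[simp] lemma traceL_apply (A : M) : traceL n A = A.trace := rfl

lemma hasFDerivAt_trace_pow (m : ℕ) (X : M) :
    HasFDerivAt (fun A : M => (A ^ m).trace) ((traceL n).comp (powD X m)) X :=
  ((traceL n).hasFDerivAt).comp X (hasFDerivAt_pow m X)

lemma trace_powD_apply (m : ℕ) (X H : M) :
    ((traceL n).comp (powD X m)) H = m * (X ^ (m - 1) * H).trace := by
  rw [ContinuousLinearMap.comp_apply, powD_apply, traceL_apply, Matrix.trace_sum]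
  have : ∀ i ∈ Finset.range m,
      (X ^ i * H * X ^ (m - 1 - i)).trace = (X ^ (m - 1) * H).trace := by
    intro i hi
    rw [Finset.mem_range] at hi
    rw [Matrix.trace_mul_cycle, ← pow_add]
    congr 3
    omega
  rw [Finset.sum_congr rfl this, Finset.sum_const, Finset.card_range, nsmul_eq_mul]

lemma trace_sq_pos {A : M} (hA : Aᵀ = A) (h0 : A ≠ 0) : 0 < (A * A).trace := by
  have hAt : A * A = Aᵀ * A := by rw [hA]
  obtain ⟨i, j, hij⟩ : ∃ i j, A i j ≠ 0 := by
    by_contra h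
    push_neg at h
    exact h0 (by ext i j; simp [h i j])
  rw [hAt]
  have htr : (Aᵀ * A).trace = ∑ j, ∑ i, A i j ^ 2 := by
    simp [Matrix.trace, Matrix.diag, Matrix.mul_apply, sq]
  rw [htr]
  apply Finset.sum_pos'
  · intro k _; positivity
  · exact ⟨j, Finset.mem_univ j, Finset.sum_pos' (fun k _ => by positivity)
      ⟨i, Finset.mem_univ i, by positivity⟩⟩

lemma pow_two_pow_ne_zero {X : M} (hX : Xᵀ = X) (hX0 : X ≠ 0) (k : ℕ) :
    X ^ (2 ^ k) ≠ 0 := by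
  induction k with
  | zero => simpa using hX0
  | succ k ih =>
    have hsym : (X ^ (2 ^ k))ᵀ = X ^ (2 ^ k) := by rw [Matrix.transpose_pow, hX]
    have hpos := trace_sq_pos hsym ih
    intro h
    have : X ^ (2 ^ (k + 1)) = X ^ (2 ^ k) * X ^ (2 ^ k) := by
      rw [← pow_add]; ring_nf
    rw [this] at h
    rw [h] at hpos
    simp at hpos

lemma pow_ne_zero' {X : M} (hX : Xᵀ = X) (hX0 : X ≠ 0) (m : ℕ) : X ^ m ≠ 0 := by
  intro h
  have hle : m ≤ 2 ^ m := Nat.le_of_lt (Nat.lt_two_pow_self (n := m))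
  have : X ^ (2 ^ m) = X ^ m * X ^ (2 ^ m - m) := by
    rw [← pow_add]; congr 1; omega
  rw [h, zero_mul] at this
  exact pow_two_pow_ne_zero hX hX0 m this

lemma trace_pow_pos {X : M} (hX : Xᵀ = X) (hX0 : X ≠ 0) (p : ℕ) :
    0 < (X ^ (2 * p)).trace := by
  have h : X ^ (2 * p) = X ^ p * X ^ p := by rw [← pow_add]; ring_nf
  rw [h]
  exact trace_sq_pos (by rw [Matrix.transpose_pow, hX]) (pow_ne_zero' hX hX0 p)

end TraceRpowAux

open TraceRpowAux in
/- The map f : X ↦ (Tr(X^(2p)))^(1/p) on n×n real matrices is Fréchet differentiable at every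
nonzero symmetric X, with derivative H ↦ 2 (Tr(X^(2p)))^(1/p - 1) Tr(X^(2p-1) H). -/
theorem differentiable_rpow_trace_pow (n p : ℕ) (hn : 0 < n) (hp : 0 < p)
    (X : Matrix (Fin n) (Fin n) ℝ) (hX : Xᵀ = X) (hX0 : X ≠ 0) :
    DifferentiableAt ℝ
        (fun A : Matrix (Fin n) (Fin n) ℝ => (A ^ (2 * p)).trace ^ (1 / (p : ℝ))) X ∧
      ∀ H : Matrix (Fin n) (Fin n) ℝ,
        fderiv ℝ (fun A : Matrix (Fin n) (Fin n) ℝ => (A ^ (2 * p)).trace ^ (1 / (p : ℝ))) X H =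
          2 * (X ^ (2 * p)).trace ^ (1 / (p : ℝ) - 1) * (X ^ (2 * p - 1) * H).trace := by
  have hpos : 0 < (X ^ (2 * p)).trace := trace_pow_pos hX hX0 p
  have hinner := hasFDerivAt_trace_pow (n := n) (2 * p) X
  have houter : HasDerivAt (fun t : ℝ => t ^ (1 / (p : ℝ)))
      ((1 / (p : ℝ)) * (X ^ (2 * p)).trace ^ (1 / (p : ℝ) - 1)) ((X ^ (2 * p)).trace) :=
    Real.hasDerivAt_rpow_const (Or.inl hpos.ne')
  have hcomp := houter.comp_hasFDerivAt X hinner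
  have hF : HasFDerivAt
      (fun A : Matrix (Fin n) (Fin n) ℝ => (A ^ (2 * p)).trace ^ (1 / (p : ℝ)))
      (((1 / (p : ℝ)) * (X ^ (2 * p)).trace ^ (1 / (p : ℝ) - 1)) •
        ((traceL n).comp (powD X (2 * p)))) X := hcomp
  refine ⟨hF.differentiableAt, fun H => ?_⟩
  rw [hF.fderiv]
  rw [ContinuousLinearMap.smul_apply, trace_powD_apply]
  have hp' : (p : ℝ) ≠ 0 := Nat.cast_ne_zero.mpr hp.ne'
  push_cast
  field_simp
  rw [smul_eq_mul, div_mul_eq_mul_div, div_eq_iff hp']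
  ring
end

section
/- Let n, p be positive integers and let f(X) = (Tr(X^(2p)))^(1/p) on the space of n×n real matrices. Then for every nonzero n×n real symmetric matrix X, f is twice Fréchet differentiable at X, and for every n×n real symmetric matrix H the second derivative of f at X evaluated at the pair of directions (H,H) satisfies D²f(X)[H,H] ≤ 2(2p−1)·(Tr(X^(2p)))^(1/p − 1)·Tr(X^(2p−2)·H²). -/
open Matrix

attribute [local instance] Matrix.normedAddCommGroup Matrix.normedSpace


variable {n : ℕ}

lemma spectral_data (X H : Matrix (Fin n) (Fin n) ℝ) (hX : Xᵀ = X) (hH : Hᵀ = H) :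
    ∃ (d : Fin n → ℝ) (K : Matrix (Fin n) (Fin n) ℝ),
      (∀ i j, K i j = K j i) ∧
      ((∀ i, d i = 0) → X = 0) ∧
      (∀ a b : ℕ, (X ^ a * H * X ^ b * H).trace
        = ∑ i, ∑ j, (d i) ^ a * (d j) ^ b * (K i j) ^ 2) ∧
      (∀ c : ℕ, (X ^ c).trace = ∑ i, (d i) ^ c) := by
  have hX' : X.IsHermitian := by
    rw [Matrix.IsHermitian, Matrix.conjTranspose_eq_transpose_of_trivial, hX]
  set u : Matrix (Fin n) (Fin n) ℝ := (hX'.eigenvectorUnitary : Matrix (Fin n) (Fin n) ℝ) with hu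
  set d : Fin n → ℝ := hX'.eigenvalues with hd
  have h1 : star u * u = 1 := hX'.eigenvectorUnitary.prop.1
  have h2 : u * star u = 1 := hX'.eigenvectorUnitary.prop.2
  have hspec : X = u * diagonal d * star u := by
    have := hX'.spectral_theorem
    simpa using this
  have hpow : ∀ a : ℕ, X ^ a = u * diagonal (d ^ a) * star u := by
    intro a
    induction a with
    | zero =>
      have hh : diagonal (d ^ 0) = (1 : Matrix (Fin n) (Fin n) ℝ) := by
        ext i j
        by_cases hij : i = j
        · subst hij; simp [Matrix.one_apply_eq]
        · simp [Matrix.diagonal_apply_ne _ hij, Matrix.one_apply_ne hij]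
      rw [pow_zero, hh, mul_one, h2]
    | succ a ih =>
      rw [pow_succ, ih, hspec,
        show diagonal (d ^ (a+1)) = diagonal (d ^ a) * diagonal d from by
          rw [Matrix.diagonal_mul_diagonal]; rfl]
      simp only [Matrix.mul_assoc]
      rw [show star u * (u * (diagonal d * star u)) = diagonal d * star u from by
        rw [← Matrix.mul_assoc (star u) u, h1, one_mul]]
  set K : Matrix (Fin n) (Fin n) ℝ := star u * H * u with hK
  have hsK : Kᵀ = K := by
    have hstar : ∀ M : Matrix (Fin n) (Fin n) ℝ, star M = Mᵀ := fun M => rfl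
    rw [hK, hstar, Matrix.transpose_mul, Matrix.transpose_mul, Matrix.transpose_transpose, hH]
    simp [Matrix.mul_assoc]
  have hKsymm : ∀ i j, K i j = K j i := by
    intro i j
    conv_lhs => rw [← hsK]
    rw [Matrix.transpose_apply]
  refine ⟨d, K, hKsymm, ?_, ?_, ?_⟩
  · intro h0
    have : diagonal d = 0 := by
      ext i j; by_cases hij : i = j <;> simp [hij, h0]
    rw [hspec, this]; simp
  · intro a b
    have key : X ^ a * H * X ^ b * H
        = u * (diagonal (d ^ a) * K * diagonal (d ^ b) * K) * star u := by
      rw [hpow a, hpow b, hK]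
      simp only [Matrix.mul_assoc]
      rw [show H * (u * (star u)) = H from by rw [h2, mul_one]]
    rw [key, Matrix.trace_mul_cycle, show star u * u = 1 from h1, one_mul]
    have hM : ∀ i j, (diagonal (d ^ a) * K * diagonal (d ^ b)) i j
        = (d i) ^ a * K i j * (d j) ^ b := by
      intro i j
      rw [Matrix.mul_diagonal, Matrix.diagonal_mul]
      simp
    rw [Matrix.trace]
    simp only [Matrix.diag_apply, Matrix.mul_apply, hM]
    refine Finset.sum_congr rfl fun i _ => Finset.sum_congr rfl fun j _ => ?_
    rw [hKsymm j i]
    ring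
  · intro c
    rw [hpow c, Matrix.trace_mul_cycle, show star u * u = 1 from h1, one_mul,
      Matrix.trace_diagonal]
    simp


lemma amgm_pow (x y : ℝ) (a b : ℕ) (hpos : 0 < a + b) (he : Even (a + b)) :
    x ^ a * y ^ b ≤ ((a : ℝ) * x ^ (a + b) + (b : ℝ) * y ^ (a + b)) / (a + b) := by
  set s := a + b with hs
  have hs0 : (s : ℝ) ≠ 0 := Nat.cast_ne_zero.mpr hpos.ne'
  have h1 : x ^ a * y ^ b ≤ |x| ^ a * |y| ^ b := by
    calc x ^ a * y ^ b ≤ |x ^ a * y ^ b| := le_abs_self _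
    _ = |x| ^ a * |y| ^ b := by rw [abs_mul, abs_pow, abs_pow]
  have key := Real.geom_mean_le_arith_mean2_weighted
    (w₁ := (a : ℝ) / s) (w₂ := (b : ℝ) / s) (p₁ := |x| ^ s) (p₂ := |y| ^ s)
    (by positivity) (by positivity) (by positivity) (by positivity)
    (by rw [← add_div, div_eq_one_iff_eq hs0, hs]; push_cast; ring)
  have hx : (|x| ^ s : ℝ) ^ ((a : ℝ) / s) = |x| ^ a := by
    rw [← Real.rpow_natCast |x| s, ← Real.rpow_mul (abs_nonneg x),
      mul_div_cancel₀ _ hs0, Real.rpow_natCast]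
  have hy : (|y| ^ s : ℝ) ^ ((b : ℝ) / s) = |y| ^ b := by
    rw [← Real.rpow_natCast |y| s, ← Real.rpow_mul (abs_nonneg y),
      mul_div_cancel₀ _ hs0, Real.rpow_natCast]
  rw [hx, hy] at key
  calc x ^ a * y ^ b ≤ |x| ^ a * |y| ^ b := h1
    _ ≤ (a : ℝ) / s * |x| ^ s + (b : ℝ) / s * |y| ^ s := key
    _ = ((a : ℝ) * x ^ s + (b : ℝ) * y ^ s) / ((a : ℝ) + b) := by
        rw [he.pow_abs x, he.pow_abs y, hs]; push_cast; ring


variable {n : ℕ}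

lemma trace_quad_le (X H : Matrix (Fin n) (Fin n) ℝ) (hX : Xᵀ = X) (hH : Hᵀ = H)
    (a b : ℕ) (he : Even (a + b)) :
    (X ^ a * H * X ^ b * H).trace ≤ (X ^ (a + b) * H * X ^ 0 * H).trace := by
  obtain ⟨d, K, hKs, -, htr, -⟩ := spectral_data X H hX hH
  rw [htr, htr]
  rcases Nat.eq_zero_or_pos (a + b) with h0 | hpos
  · obtain ⟨ha, hb⟩ : a = 0 ∧ b = 0 := by omega
    subst ha; subst hb; simp
  · set s := a + b with hs
    have hs0 : (s : ℝ) ≠ 0 := Nat.cast_ne_zero.mpr hpos.ne'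
    have hswap : ∑ i, ∑ j, (d j) ^ s * (K i j) ^ 2 = ∑ i, ∑ j, (d i) ^ s * (K i j) ^ 2 := by
      rw [Finset.sum_comm]
      exact Finset.sum_congr rfl fun i _ => Finset.sum_congr rfl fun j _ => by rw [hKs j i]
    calc ∑ i, ∑ j, (d i) ^ a * (d j) ^ b * (K i j) ^ 2
        ≤ ∑ i, ∑ j, (((a : ℝ) * (d i) ^ s + (b : ℝ) * (d j) ^ s) / ((a : ℝ) + b)) * (K i j) ^ 2 :=
          Finset.sum_le_sum fun i _ => Finset.sum_le_sum fun j _ =>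
            mul_le_mul_of_nonneg_right (amgm_pow (d i) (d j) a b hpos he) (sq_nonneg _)
      _ = ((a : ℝ) / s) * (∑ i, ∑ j, (d i) ^ s * (K i j) ^ 2)
          + ((b : ℝ) / s) * (∑ i, ∑ j, (d j) ^ s * (K i j) ^ 2) := by
          simp only [Finset.mul_sum, ← Finset.sum_add_distrib]
          refine Finset.sum_congr rfl fun i _ => Finset.sum_congr rfl fun j _ => ?_
          rw [hs]; push_cast; ring
      _ = ∑ i, ∑ j, (d i) ^ s * (K i j) ^ 2 := by
          have h1 : ((a : ℝ) + b) / s = 1 := by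
            rw [div_eq_one_iff_eq hs0, hs]; push_cast; ring
          rw [hswap, ← add_mul, ← add_div, h1, one_mul]
      _ = ∑ i, ∑ j, (d i) ^ s * (d j) ^ 0 * (K i j) ^ 2 := by
          simp
  
lemma trace_pow_pos (X : Matrix (Fin n) (Fin n) ℝ) (hX : Xᵀ = X) (hX0 : X ≠ 0)
    (m : ℕ) (hm : Even m) (hm0 : 0 < m) : 0 < (X ^ m).trace := by
  obtain ⟨d, K, -, hzero, -, htrc⟩ := spectral_data X 1 hX Matrix.transpose_one
  rw [htrc]
  have hne : ∃ i, d i ≠ 0 := by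
    by_contra h
    push_neg at h
    exact hX0 (hzero h)
  obtain ⟨i, hi⟩ := hne
  refine Finset.sum_pos' (fun j _ => hm.pow_nonneg _) ⟨i, Finset.mem_univ i, hm.pow_pos hi⟩

noncomputable def mulL (n : ℕ) :
    Matrix (Fin n) (Fin n) ℝ →L[ℝ] Matrix (Fin n) (Fin n) ℝ →L[ℝ] Matrix (Fin n) (Fin n) ℝ :=
  LinearMap.toContinuousLinearMap
    { toFun := fun A => LinearMap.toContinuousLinearMap
        { toFun := fun B => A * B
          map_add' := fun B C => Matrix.mul_add A B C
          map_smul' := fun r B => (Matrix.mul_smul A r B) }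
      map_add' := fun A A' => by ext B; simp [Matrix.add_mul]
      map_smul' := fun r A => by ext B; simp [Matrix.smul_mul] }

@[simp] lemma mulL_apply {n : ℕ} (A B : Matrix (Fin n) (Fin n) ℝ) : mulL n A B = A * B := rfl

noncomputable def traceL (n : ℕ) : Matrix (Fin n) (Fin n) ℝ →L[ℝ] ℝ :=
  LinearMap.toContinuousLinearMap (Matrix.traceLinearMap (Fin n) ℝ ℝ)

@[simp] lemma traceL_apply {n : ℕ} (A : Matrix (Fin n) (Fin n) ℝ) : traceL n A = A.trace := rfl

noncomputable def TL (n : ℕ) :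
    Matrix (Fin n) (Fin n) ℝ →L[ℝ] Matrix (Fin n) (Fin n) ℝ →L[ℝ] ℝ :=
  (ContinuousLinearMap.compL ℝ (Matrix (Fin n) (Fin n) ℝ) (Matrix (Fin n) (Fin n) ℝ) ℝ
    (traceL n)).comp (mulL n)

@[simp] lemma TL_apply {n : ℕ} (A B : Matrix (Fin n) (Fin n) ℝ) : TL n A B = (A * B).trace := rfl

noncomputable def powD (n m : ℕ) (A : Matrix (Fin n) (Fin n) ℝ) :
    Matrix (Fin n) (Fin n) ℝ →L[ℝ] Matrix (Fin n) (Fin n) ℝ :=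
  ∑ k ∈ Finset.range m, (mulL n (A ^ k)).comp ((mulL n).flip (A ^ (m - 1 - k)))

lemma powD_apply {n : ℕ} (m : ℕ) (A H : Matrix (Fin n) (Fin n) ℝ) :
    powD n m A H = ∑ k ∈ Finset.range m, A ^ k * (H * A ^ (m - 1 - k)) := by
  simp [powD, ContinuousLinearMap.sum_apply, ContinuousLinearMap.coe_comp', Function.comp_apply,
    ContinuousLinearMap.flip_apply, mulL_apply]
  rfl

lemma hasFDerivAt_matPow {n : ℕ} (m : ℕ) (A : Matrix (Fin n) (Fin n) ℝ) :
    HasFDerivAt (fun B : Matrix (Fin n) (Fin n) ℝ => B ^ m) (powD n m A) A := by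
  induction m with
  | zero =>
    have : powD n 0 A = 0 := by simp [powD]
    rw [this]
    simpa using hasFDerivAt_const (1 : Matrix (Fin n) (Fin n) ℝ) A
  | succ m ih =>
    have hb := (mulL n).isBoundedBilinearMap.hasFDerivAt (A ^ m, A)
    have h := HasFDerivAt.comp (f := fun B : Matrix (Fin n) (Fin n) ℝ => (B ^ m, B)) A hb (ih.prodMk (hasFDerivAt_id A))
    have heq : (((mulL n).isBoundedBilinearMap.deriv (A ^ m, A)).comp
        ((powD n m A).prod (ContinuousLinearMap.id ℝ _))) = powD n (m + 1) A := by
      refine ContinuousLinearMap.ext fun H => ?_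
      have hL : (((mulL n).isBoundedBilinearMap.deriv (A ^ m, A)).comp
          ((powD n m A).prod (ContinuousLinearMap.id ℝ _))) H
          = A ^ m * H + (powD n m A H) * A := by
        rfl
      rw [hL, powD_apply]
      erw [powD_apply]
      have hsum : (∑ k ∈ Finset.range m, A ^ k * (H * A ^ (m - 1 - k))) * A
          = ∑ k ∈ Finset.range m, A ^ k * (H * A ^ (m + 1 - 1 - k)) := by
        rw [Finset.sum_mul]
        refine Finset.sum_congr rfl fun k hk => ?_
        have hk' := Finset.mem_range.mp hk
        rw [mul_assoc, mul_assoc, ← pow_succ, show m - 1 - k + 1 = m + 1 - 1 - k from by omega]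
      rw [hsum, Finset.sum_range_succ]
      rw [show m + 1 - 1 - m = 0 from by omega, pow_zero, mul_one, add_comm]
    rw [← heq]
    have hfun : (fun B : Matrix (Fin n) (Fin n) ℝ => B ^ (m + 1))
        = fun B => (B ^ m) * B := by
      funext B; rw [pow_succ]
    rw [hfun]
    exact h
  
lemma contDiff_pow {n : ℕ} (m : ℕ) :
    ContDiff ℝ 2 (fun B : Matrix (Fin n) (Fin n) ℝ => B ^ m) := by
  induction m with
  | zero => simpa using contDiff_const (c := (1 : Matrix (Fin n) (Fin n) ℝ))
  | succ m ih =>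
    have h := ((mulL n).isBoundedBilinearMap.contDiff (n := 2)).comp (ih.prodMk contDiff_id)
    have hfun : (fun B : Matrix (Fin n) (Fin n) ℝ => B ^ (m + 1))
        = (fun q : Matrix (Fin n) (Fin n) ℝ × Matrix (Fin n) (Fin n) ℝ => q.1 * q.2)
          ∘ (fun B => (B ^ m, B)) := by
      funext B; simp [Function.comp, pow_succ]
    rw [hfun]
    exact h

lemma traceL_powD {n : ℕ} (m : ℕ) (A H : Matrix (Fin n) (Fin n) ℝ) :
    traceL n (powD n m A H) = m * ((A ^ (m - 1)) * H).trace := by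
  rw [powD_apply, map_sum]
  have hterm : ∀ k ∈ Finset.range m,
      traceL n (A ^ k * (H * A ^ (m - 1 - k))) = ((A ^ (m - 1)) * H).trace := by
    intro k hk
    have hk' := Finset.mem_range.mp hk
    rw [traceL_apply, ← mul_assoc, Matrix.trace_mul_cycle, ← pow_add,
      show m - 1 - k + k = m - 1 from by omega]
  rw [Finset.sum_congr rfl hterm, Finset.sum_const, Finset.card_range, nsmul_eq_mul]

lemma hasFDerivAt_tracePow {n : ℕ} (m : ℕ) (A : Matrix (Fin n) (Fin n) ℝ) :
    HasFDerivAt (fun B : Matrix (Fin n) (Fin n) ℝ => (B ^ m).trace)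
      ((traceL n).comp (powD n m A)) A :=
  (traceL n).hasFDerivAt.comp A (hasFDerivAt_matPow m A)

noncomputable instance matCLM_nacg {n : ℕ} : NormedAddCommGroup (Matrix (Fin n) (Fin n) ℝ →L[ℝ] ℝ) :=
  ContinuousLinearMap.toNormedAddCommGroup

noncomputable instance matCLM_ns {n : ℕ} : NormedSpace ℝ (Matrix (Fin n) (Fin n) ℝ →L[ℝ] ℝ) :=
  ContinuousLinearMap.toNormedSpace

/- The map f : X ↦ (Tr(X^(2p)))^(1/p) on n×n real matrices is twice Fréchet differentiable at
every nonzero symmetric X, and for every symmetric H,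
D²f(X)[H,H] ≤ 2(2p-1) (Tr(X^(2p)))^(1/p - 1) Tr(X^(2p-2) H²). -/
theorem second_deriv_rpow_trace_pow_le (n p : ℕ) (hn : 0 < n) (hp : 0 < p)
    (X : Matrix (Fin n) (Fin n) ℝ) (hX : Xᵀ = X) (hX0 : X ≠ 0) :
    ContDiffAt ℝ 2
        (fun A : Matrix (Fin n) (Fin n) ℝ => (A ^ (2 * p)).trace ^ (1 / (p : ℝ))) X ∧
      ∀ H : Matrix (Fin n) (Fin n) ℝ, Hᵀ = H →
        iteratedFDeriv ℝ 2
            (fun A : Matrix (Fin n) (Fin n) ℝ => (A ^ (2 * p)).trace ^ (1 / (p : ℝ))) X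
            ![H, H] ≤
          2 * (2 * p - 1 : ℝ) * (X ^ (2 * p)).trace ^ (1 / (p : ℝ) - 1) *
            (X ^ (2 * p - 2) * H ^ 2).trace := by
  have hp0 : (p : ℝ) ≠ 0 := Nat.cast_ne_zero.mpr hp.ne'
  have hp1 : (1 : ℝ) ≤ (p : ℝ) := by exact_mod_cast hp
  set m := 2 * p with hm
  have hm2 : 2 ≤ m := by omega
  have hτ : 0 < (X ^ m).trace := trace_pow_pos X hX hX0 m ⟨p, by omega⟩ (by omega)
  have hFc : ContDiff ℝ 2 (fun A : Matrix (Fin n) (Fin n) ℝ => (A ^ m).trace) :=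
    (traceL n).contDiff.comp (contDiff_pow m)
  constructor
  · exact (Real.contDiffAt_rpow_const_of_ne hτ.ne').comp X hFc.contDiffAt
  · intro H hH
    have hf' : ∀ A : Matrix (Fin n) (Fin n) ℝ, (A ^ m).trace ≠ 0 →
        HasFDerivAt (fun B : Matrix (Fin n) (Fin n) ℝ => (B ^ m).trace ^ (1 / (p : ℝ)))
          ((((m : ℝ) / p) * (A ^ m).trace ^ (1 / (p : ℝ) - 1)) • TL n (A ^ (m - 1))) A := by
      intro A hA
      have h0 := hasFDerivAt_tracePow (n := n) m A
      have h1 : HasDerivAt (fun t : ℝ => t ^ (1 / (p : ℝ)))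
          ((1 / (p : ℝ)) * (A ^ m).trace ^ (1 / (p : ℝ) - 1)) ((A ^ m).trace) :=
        Real.hasDerivAt_rpow_const (Or.inl hA)
      have h2 := h1.comp_hasFDerivAt A h0
      have heq : ((1 / (p : ℝ)) * (A ^ m).trace ^ (1 / (p : ℝ) - 1)) •
            ((traceL n).comp (powD n m A))
          = (((m : ℝ) / p) * (A ^ m).trace ^ (1 / (p : ℝ) - 1)) • TL n (A ^ (m - 1)) := by
        ext H'
        simp only [ContinuousLinearMap.smul_apply, ContinuousLinearMap.coe_comp',
          Function.comp_apply, TL_apply, smul_eq_mul, traceL_powD]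
        ring
      rw [← heq]
      exact h2
    have hopen : IsOpen {A : Matrix (Fin n) (Fin n) ℝ | (A ^ m).trace ≠ 0} :=
      (isOpen_ne (x := (0:ℝ))).preimage hFc.continuous
    have hev : (fderiv ℝ (fun A : Matrix (Fin n) (Fin n) ℝ => (A ^ m).trace ^ (1 / (p : ℝ))))
        =ᶠ[nhds X] (fun A : Matrix (Fin n) (Fin n) ℝ =>
          (((m : ℝ) / p) * (A ^ m).trace ^ (1 / (p : ℝ) - 1)) • TL n (A ^ (m - 1))) := by
      filter_upwards [hopen.mem_nhds (show X ∈ _ from hτ.ne')] with A hA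
      exact (hf' A hA).fderiv
    have h0X := hasFDerivAt_tracePow (n := n) m X
    have h3 : HasFDerivAt (fun A : Matrix (Fin n) (Fin n) ℝ => TL n (A ^ (m - 1)))
        ((TL n).comp (powD n (m - 1) X)) X :=
      (TL n).hasFDerivAt.comp X (hasFDerivAt_matPow (m - 1) X)
    have h4 : HasDerivAt (fun t : ℝ => t ^ (1 / (p : ℝ) - 1))
        ((1 / (p : ℝ) - 1) * (X ^ m).trace ^ (1 / (p : ℝ) - 2)) ((X ^ m).trace) := by
      have h := Real.hasDerivAt_rpow_const (x := (X ^ m).trace)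
        (p := 1 / (p : ℝ) - 1) (Or.inl hτ.ne')
      rw [show (1 / (p : ℝ) - 1 - 1) = 1 / (p : ℝ) - 2 from by ring] at h
      exact h
    have h5 := (h4.comp_hasFDerivAt X h0X).const_mul ((m : ℝ) / p)
    have h6 : HasFDerivAt (fun A : Matrix (Fin n) (Fin n) ℝ =>
        (((m : ℝ) / p) * (A ^ m).trace ^ (1 / (p : ℝ) - 1)) • TL n (A ^ (m - 1)))
        ((((m : ℝ) / p) * (X ^ m).trace ^ (1 / (p : ℝ) - 1)) • ((TL n).comp (powD n (m - 1) X))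
          + (((m : ℝ) / p) • (((1 / (p : ℝ) - 1) * (X ^ m).trace ^ (1 / (p : ℝ) - 2)) •
              ((traceL n).comp (powD n m X)))).smulRight (TL n (X ^ (m - 1)))) X :=
      @HasFDerivAt.smul _ _ _ _ _ _ _ _ _ _ _ _ _ _ _ _ (by exact IsScalarTower.left ℝ) _ _ h5 h3
    rw [iteratedFDeriv_two_apply]
    erw [hev.fderiv_eq, h6.fderiv]
    simp only [Matrix.cons_val_zero, Matrix.cons_val_one, Matrix.head_cons,
      ContinuousLinearMap.add_apply, ContinuousLinearMap.smul_apply,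
      ContinuousLinearMap.smulRight_apply, ContinuousLinearMap.coe_comp',
      Function.comp_apply, TL_apply, traceL_powD, smul_eq_mul]
    show ((m : ℝ) / p * (X ^ m).trace ^ (1 / (p : ℝ) - 1)) * (powD n (m - 1) X H * H).trace
        + ((m : ℝ) / p) * ((1 / (p : ℝ) - 1) * (X ^ m).trace ^ (1 / (p : ℝ) - 2) *
          traceL n (powD n m X H)) * ((X ^ (m - 1)) * H).trace ≤ _
    rw [traceL_powD]
    set t := ((X ^ (m - 1)) * H).trace with ht
    set R := ((X ^ (m - 2)) * H ^ 2).trace with hR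
    set τ' := (X ^ m).trace ^ (1 / (p : ℝ) - 1) with hτ'
    set τ'' := (X ^ m).trace ^ (1 / (p : ℝ) - 2) with hτ''
    have hτ'pos : 0 < τ' := Real.rpow_pos_of_pos hτ _
    have hτ''pos : 0 < τ'' := Real.rpow_pos_of_pos hτ _
    have hS : (powD n (m - 1) X H * H).trace ≤ ((m : ℝ) - 1) * R := by
      rw [powD_apply, Finset.sum_mul, Matrix.trace_sum]
      have hterm : ∀ k ∈ Finset.range (m - 1),
          (X ^ k * (H * X ^ (m - 1 - 1 - k)) * H).trace ≤ R := by
        intro k hk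
        have hk' := Finset.mem_range.mp hk
        have h := trace_quad_le X H hX hH k (m - 2 - k) ⟨p - 1, by omega⟩
        rw [show k + (m - 2 - k) = m - 2 from by omega] at h
        calc (X ^ k * (H * X ^ (m - 1 - 1 - k)) * H).trace
            = (X ^ k * H * X ^ (m - 2 - k) * H).trace := by
              rw [show m - 1 - 1 - k = m - 2 - k from by omega, ← mul_assoc]
          _ ≤ (X ^ (m - 2) * H * X ^ 0 * H).trace := h
          _ = R := by rw [hR, pow_zero, mul_one, mul_assoc, ← sq]
      calc ∑ k ∈ Finset.range (m - 1), (X ^ k * (H * X ^ (m - 1 - 1 - k)) * H).trace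
          ≤ ∑ _k ∈ Finset.range (m - 1), R := Finset.sum_le_sum hterm
        _ = ((m : ℝ) - 1) * R := by
            rw [Finset.sum_const, Finset.card_range, nsmul_eq_mul,
              Nat.cast_sub (by omega : 1 ≤ m), Nat.cast_one]
    have hmcast : (m : ℝ) = 2 * p := by rw [hm]; push_cast; ring
    have hfirst : ((m : ℝ) / p) * τ' * (powD n (m - 1) X H * H).trace
        ≤ ((m : ℝ) / p) * τ' * (((m : ℝ) - 1) * R) := by
      refine mul_le_mul_of_nonneg_left hS ?_
      have : (0 : ℝ) ≤ (m : ℝ) / p := by positivity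
      exact mul_nonneg this hτ'pos.le
    have hsecond : ((m : ℝ) / p) * ((1 / (p : ℝ) - 1) * τ'' * ((m : ℝ) * t)) * t ≤ 0 := by
      have h1p : 1 / (p : ℝ) - 1 ≤ 0 := by
        have : 1 / (p : ℝ) ≤ 1 := by
          rw [div_le_one (by linarith)]; exact hp1
        linarith
      have heq : ((m : ℝ) / p) * ((1 / (p : ℝ) - 1) * τ'' * ((m : ℝ) * t)) * t
          = (((m : ℝ) / p) * (m : ℝ) * τ'') * ((1 / (p : ℝ) - 1) * (t * t)) := by ring
      rw [heq]
      apply mul_nonpos_of_nonneg_of_nonpos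
      · have : (0 : ℝ) ≤ (m : ℝ) / p * m := by positivity
        exact mul_nonneg this hτ''pos.le
      · exact mul_nonpos_of_nonpos_of_nonneg h1p (mul_self_nonneg t)
    calc ((m : ℝ) / p) * τ' * (powD n (m - 1) X H * H).trace
          + ((m : ℝ) / p) * ((1 / (p : ℝ) - 1) * τ'' * ((m : ℝ) * t)) * t
        ≤ ((m : ℝ) / p) * τ' * (((m : ℝ) - 1) * R) + 0 := add_le_add hfirst hsecond
      _ = 2 * (2 * (p : ℝ) - 1) * τ' * R := by
          rw [add_zero, hmcast]
          field_simp
end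

section
/- Let n, p be positive integers and let X and H be n×n complex Hermitian matrices. Then the sum over k = 0, 1, …, 2p−2 of Tr(X^k · H · X^(2p−2−k) · H) is at most (2p−1)·Tr(X^(2p−2)·H²), where all traces are real numbers. -/
/-!
Diagonalize `X = U diag(λ) U*` and put `B = U* H U`, again Hermitian. Then
`Tr (X^k H X^l H) = ∑ i j, |B i j|² λ_i^k λ_j^l`, so with `m = 2p - 2` the inequality reduces,
weight by weight, to `2 ∑_{k+l=m} a^k b^l ≤ (m+1)(a^m + b^m)` for real `a, b` and even `m`.
This follows by pairing the terms `(k, l)` and `(l, k)`: since `k + l` is even, `x ↦ x^k` and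
`x ↦ x^l` are similarly ordered, and the rearrangement inequality gives
`a^k b^l + a^l b^k ≤ a^m + b^m`. Symmetry of the weights `|B i j|²` then identifies the
resulting right-hand side with `(m+1) Tr (X^m H²)`.
-/

open Matrix Finset Unitary

section Scalar

variable {R : Type*} [CommRing R] [LinearOrder R] [IsStrictOrderedRing R]

theorem monovary_pow_pow {k l : ℕ} (hkl : Even (k + l)) :
    Monovary (fun x : R ↦ x ^ k) (fun x : R ↦ x ^ l) := by
  rcases Nat.even_or_odd k with hk | hk
  · have hl : Even l := (Nat.even_add.mp hkl).mp hk
    intro x y hxy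
    dsimp only at hxy ⊢
    rw [← hl.pow_abs, ← hl.pow_abs y] at hxy
    rw [← hk.pow_abs, ← hk.pow_abs y]
    exact pow_le_pow_left₀ (abs_nonneg x)
      (lt_of_pow_lt_pow_left₀ l (abs_nonneg y) hxy).le k
  · have hl : Odd l := (Nat.even_add'.mp hkl).mp hk
    exact hk.strictMono_pow.monotone.monovary hl.strictMono_pow.monotone

theorem pow_mul_pow_add_pow_mul_pow_le (a b : R) {k l : ℕ} (hkl : Even (k + l)) :
    a ^ k * b ^ l + a ^ l * b ^ k ≤ a ^ (k + l) + b ^ (k + l) := by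
  have := (monovary_pow_pow hkl).mul_add_mul_le_mul_add_mul a b
  rw [pow_add, pow_add]
  linarith [mul_comm (b ^ k) (a ^ l)]

theorem two_mul_sum_antidiagonal_pow_mul_pow_le (a b : R) {m : ℕ} (hm : Even m) :
    2 * ∑ kl ∈ antidiagonal m, a ^ kl.1 * b ^ kl.2 ≤ (m + 1) * (a ^ m + b ^ m) := by
  calc 2 * ∑ kl ∈ antidiagonal m, a ^ kl.1 * b ^ kl.2
      = ∑ kl ∈ antidiagonal m, (a ^ kl.1 * b ^ kl.2 + a ^ kl.2 * b ^ kl.1) := by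
        rw [sum_add_distrib, ← Nat.sum_antidiagonal_swap, two_mul]
        rfl
    _ ≤ ∑ _kl ∈ antidiagonal m, (a ^ m + b ^ m) := by
        refine sum_le_sum fun kl hkl ↦ ?_
        rw [← mem_antidiagonal.mp hkl]
        exact pow_mul_pow_add_pow_mul_pow_le a b ((mem_antidiagonal.mp hkl) ▸ hm)
    _ = (m + 1) * (a ^ m + b ^ m) := by
        rw [sum_const, Nat.card_antidiagonal, nsmul_eq_mul]
        push_cast
        ring

theorem sum_antidiagonal_sum_sum_mul_pow_mul_pow_le {ι : Type*} [Fintype ι] (μ : ι → R)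
    (w : ι → ι → R) (hw : ∀ i j, 0 ≤ w i j) (hw_symm : ∀ i j, w j i = w i j) {m : ℕ}
    (hm : Even m) :
    ∑ kl ∈ antidiagonal m, ∑ i, ∑ j, w i j * μ i ^ kl.1 * μ j ^ kl.2 ≤
      (m + 1) * ∑ i, ∑ j, w i j * μ i ^ m := by
  have hswap : ∑ i, ∑ j, w i j * μ j ^ m = ∑ i, ∑ j, w i j * μ i ^ m := by
    rw [sum_comm]
    simp only [hw_symm]
  have hpoint (i j : ι) : 2 * ∑ kl ∈ antidiagonal m, w i j * μ i ^ kl.1 * μ j ^ kl.2 ≤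
      (m + 1) * (w i j * μ i ^ m + w i j * μ j ^ m) := by
    simp only [mul_assoc, ← mul_sum, ← mul_add]
    rw [mul_left_comm, mul_left_comm (m + 1 : R)]
    exact mul_le_mul_of_nonneg_left (two_mul_sum_antidiagonal_pow_mul_pow_le _ _ hm) (hw i j)
  have h2 : 2 * ∑ kl ∈ antidiagonal m, ∑ i, ∑ j, w i j * μ i ^ kl.1 * μ j ^ kl.2 ≤
      2 * ((m + 1) * ∑ i, ∑ j, w i j * μ i ^ m) := by
    calc 2 * ∑ kl ∈ antidiagonal m, ∑ i, ∑ j, w i j * μ i ^ kl.1 * μ j ^ kl.2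
        = ∑ i, ∑ j, 2 * ∑ kl ∈ antidiagonal m, w i j * μ i ^ kl.1 * μ j ^ kl.2 := by
          simp only [mul_sum]
          rw [sum_comm]
          exact sum_congr rfl fun i _ ↦ sum_comm
      _ ≤ ∑ i, ∑ j, (m + 1) * (w i j * μ i ^ m + w i j * μ j ^ m) :=
          sum_le_sum fun i _ ↦ sum_le_sum fun j _ ↦ hpoint i j
      _ = 2 * ((m + 1) * ∑ i, ∑ j, w i j * μ i ^ m) := by
          simp only [← mul_sum, sum_add_distrib, hswap]
          ring
  exact le_of_mul_le_mul_left h2 two_pos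

end Scalar

section Spectral

variable {𝕜 : Type*} [RCLike 𝕜] {n : Type*} [Fintype n] [DecidableEq n]

theorem Matrix.trace_conjStarAlgAut (U : unitary (Matrix n n 𝕜)) (M : Matrix n n 𝕜) :
    trace (conjStarAlgAut 𝕜 _ U M) = trace M := by
  rw [conjStarAlgAut_apply, trace_mul_cycle, coe_star_mul_self, one_mul]

theorem Matrix.trace_diagonal_mul_mul_diagonal_mul (d e : n → 𝕜) (B C : Matrix n n 𝕜) :
    trace (diagonal d * B * diagonal e * C) = ∑ i, ∑ j, d i * e j * (B i j * C j i) := by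
  simp only [trace, diag, mul_apply, diagonal_apply, ite_mul, zero_mul, mul_ite, mul_zero,
    sum_ite_eq, sum_ite_eq', mem_univ, if_true]
  exact sum_congr rfl fun i _ ↦ sum_congr rfl fun j _ ↦ by ring

theorem Matrix.IsHermitian.exists_re_trace_pow_mul_mul_pow_mul_eq {X H : Matrix n n 𝕜}
    (hX : X.IsHermitian) (hH : H.IsHermitian) :
    ∃ w : n → n → ℝ, (∀ i j, 0 ≤ w i j) ∧ (∀ i j, w j i = w i j) ∧
      ∀ k l : ℕ, RCLike.re (trace (X ^ k * H * X ^ l * H)) =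
        ∑ i, ∑ j, w i j * hX.eigenvalues i ^ k * hX.eigenvalues j ^ l := by
  set U := hX.eigenvectorUnitary
  set B := (conjStarAlgAut 𝕜 _ U).symm H
  have hB : B.IsHermitian := by
    rw [IsHermitian, ← star_eq_conjTranspose, ← map_star, hH.star_eq]
  refine ⟨fun i j ↦ ‖B i j‖ ^ 2, fun _ _ ↦ by positivity, fun i j ↦ ?_, fun k l ↦ ?_⟩
  · change ‖B j i‖ ^ 2 = ‖B i j‖ ^ 2
    rw [← hB.apply i j, norm_star]
  have hX_diag : X = conjStarAlgAut 𝕜 _ U (diagonal (RCLike.ofReal ∘ hX.eigenvalues)) :=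
    hX.spectral_theorem
  have hH_conj : H = conjStarAlgAut 𝕜 _ U B := (StarAlgEquiv.apply_symm_apply _ H).symm
  have hentry (i j : n) : B i j * B j i = (‖B i j‖ ^ 2 : ℝ) := by
    rw [← hB.apply j i, RCLike.star_def, RCLike.mul_conj, RCLike.ofReal_pow]
  calc RCLike.re (trace (X ^ k * H * X ^ l * H))
      = RCLike.re (trace (conjStarAlgAut 𝕜 _ U
          (diagonal (RCLike.ofReal ∘ hX.eigenvalues) ^ k * B *
            diagonal (RCLike.ofReal ∘ hX.eigenvalues) ^ l * B))) := by
        rw [map_mul, map_mul, map_mul, map_pow, map_pow, ← hX_diag, ← hH_conj]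
    _ = ∑ i, ∑ j, ‖B i j‖ ^ 2 * hX.eigenvalues i ^ k * hX.eigenvalues j ^ l := by
        simp only [trace_conjStarAlgAut, diagonal_pow, trace_diagonal_mul_mul_diagonal_mul,
          Pi.pow_apply, Function.comp_apply, hentry, map_sum]
        refine sum_congr rfl fun i _ ↦ sum_congr rfl fun j _ ↦ ?_
        norm_cast
        ring

end Spectral

theorem sum_trace_pow_le_general (n p : ℕ) (hp : 0 < p)
    (X H : Matrix (Fin n) (Fin n) ℂ) (hX : Xᴴ = X) (hH : Hᴴ = H) :
    ∑ k ∈ Finset.range (2 * p - 1),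
        (Matrix.trace (X ^ k * H * X ^ (2 * p - 2 - k) * H)).re ≤
      (2 * p - 1 : ℝ) * (Matrix.trace (X ^ (2 * p - 2) * H ^ 2)).re := by
  obtain ⟨w, hw, hw_symm, htrace⟩ := IsHermitian.exists_re_trace_pow_mul_mul_pow_mul_eq hX hH
  have hm : Even (2 * p - 2) := ⟨p - 1, by omega⟩
  have hcard : 2 * p - 1 = (2 * p - 2) + 1 := by omega
  have hcoeff : (2 * p - 1 : ℝ) = ((2 * p - 2 : ℕ) : ℝ) + 1 := by
    rw [Nat.cast_sub (by omega)]
    push_cast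
    ring
  have hsq : X ^ (2 * p - 2) * H ^ 2 = X ^ (2 * p - 2) * H * X ^ 0 * H := by
    rw [pow_zero, mul_one, sq, mul_assoc]
  rw [hcard, ← Nat.sum_antidiagonal_eq_sum_range_succ
      (fun k l ↦ (trace (X ^ k * H * X ^ l * H)).re), hcoeff, hsq]
  simp only [← RCLike.re_to_complex, htrace]
  simp only [pow_zero, mul_one]
  exact sum_antidiagonal_sum_sum_mul_pow_mul_pow_le _ w hw hw_symm hm

theorem sum_trace_pow_le (n p : ℕ) (hn : 0 < n) (hp : 0 < p)
    (X H : Matrix (Fin n) (Fin n) ℂ) (hX : Xᴴ = X) (hH : Hᴴ = H) :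
    ∑ k ∈ Finset.range (2 * p - 1),
        (Matrix.trace (X ^ k * H * X ^ (2 * p - 2 - k) * H)).re ≤
      (2 * p - 1 : ℝ) * (Matrix.trace (X ^ (2 * p - 2) * H ^ 2)).re :=
  sum_trace_pow_le_general n p hp X H hX hH
end
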